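/- Let h > 0 and let α* ∈ (0, (s 0)²/2) be a minimizer of T_h over [0, (s 0)²/2]. Then α* satisfies the optimality condition α* (s 0)² / ((s 0)² + α*)³ = h · ∑_{i < r} (s i)⁴ / ((s i)² + α*)³. -/

import Mathlib

/-- The PRO function `T_h(α) = f₁(α) + h·f₂(α)` for Tikhonov regularization. -/
noncomputable def proT (r : ℕ) (hr : 0 < r) (s : Fin r → ℝ) (h : ℝ) (α : ℝ) : ℝ :=
  α ^ 2 / (α + (s ⟨0, hr⟩) ^ 2) ^ 2 + h * ∑ i, (s i) ^ 4 / (α + (s i) ^ 2) ^ 2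

theorem hasDerivAt_const_div_add_sq (b c x : ℝ) (hx : x + c ≠ 0) :
    HasDerivAt (fun α : ℝ => b / (α + c) ^ 2) (-2 * b / (x + c) ^ 3) x := by
  have hden : HasDerivAt (fun α : ℝ => (α + c) ^ 2) (2 * (x + c)) x := by
    simpa using ((hasDerivAt_id x).add_const c).fun_pow 2
  refine ((hasDerivAt_const x b).fun_div hden (pow_ne_zero 2 hx)).congr_deriv ?_
  field_simp
  ring

theorem hasDerivAt_sq_div_add_sq (c x : ℝ) (hx : x + c ≠ 0) :
    HasDerivAt (fun α : ℝ => α ^ 2 / (α + c) ^ 2) (2 * x * c / (x + c) ^ 3) x := by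
  have hden : HasDerivAt (fun α : ℝ => (α + c) ^ 2) (2 * (x + c)) x := by
    simpa using ((hasDerivAt_id x).add_const c).fun_pow 2
  refine ((hasDerivAt_pow 2 x).fun_div hden (pow_ne_zero 2 hx)).congr_deriv ?_
  field_simp
  ring

theorem hasDerivAt_proT (r : ℕ) (hr : 0 < r) (s : Fin r → ℝ) (h a : ℝ) (ha : 0 < a) :
    HasDerivAt (proT r hr s h)
      (2 * (a * (s ⟨0, hr⟩) ^ 2 / ((s ⟨0, hr⟩) ^ 2 + a) ^ 3
        - h * ∑ i, (s i) ^ 4 / ((s i) ^ 2 + a) ^ 3)) a := by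
  have hden : ∀ i, a + s i ^ 2 ≠ 0 := fun i => by positivity
  have hsum := HasDerivAt.fun_sum (u := Finset.univ)
    fun i _ => hasDerivAt_const_div_add_sq (s i ^ 4) (s i ^ 2) a (hden i)
  refine ((hasDerivAt_sq_div_add_sq _ a (hden _)).add (hsum.const_mul h)).congr_deriv ?_
  have hsum_eq : ∑ i, -2 * s i ^ 4 / (a + s i ^ 2) ^ 3
      = -2 * ∑ i, s i ^ 4 / (s i ^ 2 + a) ^ 3 := by
    rw [Finset.mul_sum]
    exact Finset.sum_congr rfl fun i _ => by ring
  rw [hsum_eq]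
  ring

theorem proT_optimality_condition_general (r : ℕ) (hr : 0 < r) (s : Fin r → ℝ)
    (h : ℝ)
    (a : ℝ) (ha : a ∈ Set.Ioo (0 : ℝ) ((s ⟨0, hr⟩) ^ 2 / 2))
    (hamin : IsMinOn (proT r hr s h) (Set.Icc 0 ((s ⟨0, hr⟩) ^ 2 / 2)) a) :
    a * (s ⟨0, hr⟩) ^ 2 / ((s ⟨0, hr⟩) ^ 2 + a) ^ 3
      = h * ∑ i, (s i) ^ 4 / ((s i) ^ 2 + a) ^ 3 := by
  have hloc : IsLocalMin (proT r hr s h) a := hamin.isLocalMin (Icc_mem_nhds ha.1 ha.2)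
  have hcrit := hloc.hasDerivAt_eq_zero (hasDerivAt_proT r hr s h a ha.1)
  linarith

/-- An interior minimizer `α* ∈ (0, (s 0)²/2)` of `T_h` over `[0, (s 0)²/2]`
satisfies the optimality condition
`α* (s 0)² / ((s 0)² + α*)³ = h · ∑_{i<r} (s i)⁴ / ((s i)² + α*)³`. -/
theorem proT_optimality_condition (r : ℕ) (hr : 0 < r) (s : Fin r → ℝ)
    (hpos : ∀ i, 0 < s i) (hmax : ∀ i, s i ≤ s ⟨0, hr⟩)
    (h : ℝ) (hh : 0 < h)
    (a : ℝ) (ha : a ∈ Set.Ioo (0 : ℝ) ((s ⟨0, hr⟩) ^ 2 / 2))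
    (hamin : IsMinOn (proT r hr s h) (Set.Icc 0 ((s ⟨0, hr⟩) ^ 2 / 2)) a) :
    a * (s ⟨0, hr⟩) ^ 2 / ((s ⟨0, hr⟩) ^ 2 + a) ^ 3
      = h * ∑ i, (s i) ^ 4 / ((s i) ^ 2 + a) ^ 3 :=
  proT_optimality_condition_general r hr s h a ha hamin
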